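/- arXiv:0810.1126 — 4 statements merged into one kernel-verified Lean document; each statement's English description precedes it below -/
import Mathlib

section
/- The function D is a metric on Û: for all x, y, z ∈ Û one has D(x,y) ≥ 0 with D(x,y) = 0 if and only if x = y, D(x,y) = D(y,x), and D(x,z) ≤ D(x,y) + D(y,z). Moreover, whenever two points x, y ∈ Û are both contained in some member of 𝒮, one has d(x,y) ≤ D(x,y). -/
/-- Lemma 5.2(a): the cylinder function `D` is a metric on `Û`, and it dominates
the original metric `d` on pairs of points lying in a common cylinder. -/
theorem stmt_0 {X : Type*} [MetricSpace X]
    (S : Set (Set X))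
    (hne : ∀ C ∈ S, (C : Set X).Nonempty)
    (hbdd : ∀ C ∈ S, Bornology.IsBounded C)
    (hdiam : ∀ C ∈ S, Metric.diam C < 1)
    (hcomp : ∀ C ∈ S, ∀ C' ∈ S, (C ∩ C').Nonempty → C ⊆ C' ∨ C' ⊆ C)
    (D : X → X → ℝ)
    (hD1 : ∀ x y : X, (∃ C ∈ S, x ∈ C ∧ y ∈ C) →
      D x y = sInf {r : ℝ | ∃ C ∈ S, x ∈ C ∧ y ∈ C ∧ r = Metric.diam C})
    (hD2 : ∀ x y : X, ¬ (∃ C ∈ S, x ∈ C ∧ y ∈ C) → D x y = 1)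
    (Uhat : Set X)
    (hU : ∀ x ∈ Uhat, ∀ ε > 0, ∃ C ∈ S, x ∈ C ∧ Metric.diam C < ε) :
    (∀ x ∈ Uhat, ∀ y ∈ Uhat, ∀ z ∈ Uhat,
        0 ≤ D x y ∧ (D x y = 0 ↔ x = y) ∧ D x y = D y x ∧ D x z ≤ D x y + D y z)
    ∧ (∀ x ∈ Uhat, ∀ y ∈ Uhat, (∃ C ∈ S, x ∈ C ∧ y ∈ C) → dist x y ≤ D x y) := by
  set T : X → X → Set ℝ :=
    fun x y => {r : ℝ | ∃ C ∈ S, x ∈ C ∧ y ∈ C ∧ r = Metric.diam C} with hT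
  have hlb : ∀ x y : X, (0 : ℝ) ∈ lowerBounds (T x y) := by
    rintro x y r ⟨C, _, _, _, rfl⟩
    exact Metric.diam_nonneg
  have hbb : ∀ x y : X, BddBelow (T x y) := fun x y => ⟨0, hlb x y⟩
  -- D ≤ diam of any common cylinder
  have hDle : ∀ x y : X, ∀ C ∈ S, x ∈ C → y ∈ C → D x y ≤ Metric.diam C := by
    intro x y C hC hx hy
    rw [hD1 x y ⟨C, hC, hx, hy⟩]
    exact csInf_le (hbb x y) ⟨C, hC, hx, hy, rfl⟩
  -- d ≤ D when a common cylinder exists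
  have hdistD : ∀ x y : X, (∃ C ∈ S, x ∈ C ∧ y ∈ C) → dist x y ≤ D x y := by
    rintro x y ⟨C, hC, hx, hy⟩
    rw [hD1 x y ⟨C, hC, hx, hy⟩]
    refine le_csInf ⟨Metric.diam C, C, hC, hx, hy, rfl⟩ ?_
    rintro r ⟨C', hC', hx', hy', rfl⟩
    exact Metric.dist_le_diam_of_mem (hbdd C' hC') hx' hy'
  -- nonnegativity
  have hnn : ∀ x y : X, 0 ≤ D x y := by
    intro x y
    by_cases h : ∃ C ∈ S, x ∈ C ∧ y ∈ C
    · exact le_trans dist_nonneg (hdistD x y h)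
    · rw [hD2 x y h]; norm_num
  -- D ≤ 1 always
  have hle1 : ∀ x y : X, D x y ≤ 1 := by
    intro x y
    by_cases h : ∃ C ∈ S, x ∈ C ∧ y ∈ C
    · obtain ⟨C, hC, hx, hy⟩ := h
      exact le_trans (hDle x y C hC hx hy) (le_of_lt (hdiam C hC))
    · rw [hD2 x y h]
  -- symmetry
  have hsymm : ∀ x y : X, D x y = D y x := by
    intro x y
    by_cases h : ∃ C ∈ S, x ∈ C ∧ y ∈ C
    · obtain ⟨C, hC, hx, hy⟩ := h
      rw [hD1 x y ⟨C, hC, hx, hy⟩, hD1 y x ⟨C, hC, hy, hx⟩]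
      congr 1
      ext r
      constructor
      · rintro ⟨C', hC', hx', hy', rfl⟩; exact ⟨C', hC', hy', hx', rfl⟩
      · rintro ⟨C', hC', hy', hx', rfl⟩; exact ⟨C', hC', hx', hy', rfl⟩
    · have h' : ¬ ∃ C ∈ S, y ∈ C ∧ x ∈ C := by
        rintro ⟨C, hC, hy, hx⟩; exact h ⟨C, hC, hx, hy⟩
      rw [hD2 x y h, hD2 y x h']
  -- zero iff equal (for points of Uhat)
  have hzero : ∀ x ∈ Uhat, ∀ y : X, (D x y = 0 ↔ x = y) := by
    intro x hx y
    constructor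
    · intro h0
      by_cases h : ∃ C ∈ S, x ∈ C ∧ y ∈ C
      · have := hdistD x y h
        rw [h0] at this
        exact dist_le_zero.mp this
      · rw [hD2 x y h] at h0; norm_num at h0
    · rintro rfl
      refine le_antisymm ?_ (hnn x x)
      refine le_of_forall_pos_le_add ?_
      intro ε hε
      obtain ⟨C, hC, hxC, hCd⟩ := hU x hx ε hε
      have := hDle x x C hC hxC hxC
      linarith
  -- triangle inequality
  have htri : ∀ x y z : X, D x z ≤ D x y + D y z := by
    intro x y z
    by_cases h1 : ∃ C ∈ S, x ∈ C ∧ y ∈ C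
    · by_cases h2 : ∃ C ∈ S, y ∈ C ∧ z ∈ C
      · -- key: for any witnesses, D x z ≤ diam C1 + diam C2
        have key : ∀ r1 ∈ T x y, ∀ r2 ∈ T y z, D x z ≤ r1 + r2 := by
          rintro r1 ⟨C1, hC1, hx1, hy1, rfl⟩ r2 ⟨C2, hC2, hy2, hz2, rfl⟩
          have hcap : (C1 ∩ C2).Nonempty := ⟨y, hy1, hy2⟩
          rcases hcomp C1 hC1 C2 hC2 hcap with hsub | hsub
          · have := hDle x z C2 hC2 (hsub hx1) hz2
            have h1' : (0:ℝ) ≤ Metric.diam C1 := Metric.diam_nonneg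
            linarith
          · have := hDle x z C1 hC1 hx1 (hsub hz2)
            have h2' : (0:ℝ) ≤ Metric.diam C2 := Metric.diam_nonneg
            linarith
        obtain ⟨C1, hC1, hx1, hy1⟩ := h1
        obtain ⟨C2, hC2, hy2, hz2⟩ := h2
        have step1 : ∀ r2 ∈ T y z, D x z ≤ D x y + r2 := by
          intro r2 hr2
          rw [hD1 x y ⟨C1, hC1, hx1, hy1⟩]
          have : D x z - r2 ≤ sInf (T x y) := by
            refine le_csInf ⟨Metric.diam C1, C1, hC1, hx1, hy1, rfl⟩ ?_
            intro r1 hr1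
            linarith [key r1 hr1 r2 hr2]
          linarith
        rw [hD1 y z ⟨C2, hC2, hy2, hz2⟩]
        have : D x z - D x y ≤ sInf (T y z) := by
          refine le_csInf ⟨Metric.diam C2, C2, hC2, hy2, hz2, rfl⟩ ?_
          intro r2 hr2
          linarith [step1 r2 hr2]
        linarith
      · rw [hD2 y z h2]
        have := hle1 x z
        have := hnn x y
        linarith
    · rw [hD2 x y h1]
      have := hle1 x z
      have := hnn y z
      linarith
  constructor
  · intro x hx y hy z hz
    exact ⟨hnn x y, hzero x hx y, hsymm x y, htri x y z⟩
  · intro x _ y _ h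
    exact hdistD x y h
end

section
/- For all x, y ∈ X one has |χ(x) − χ(y)| ≤ D(x,y)/diam(C₀); that is, the indicator function of any cylinder of positive diameter is Lipschitz with respect to D, with Lipschitz constant at most 1/diam(C₀). -/
/-- Lemma 5.2(b): the indicator function of a cylinder `C₀` of positive diameter is
Lipschitz with respect to the cylinder metric `D`, with constant `1 / diam C₀`. -/
theorem stmt_1 {X : Type*} [MetricSpace X]
    (S : Set (Set X))
    (hne : ∀ C ∈ S, (C : Set X).Nonempty)
    (hbdd : ∀ C ∈ S, Bornology.IsBounded C)
    (hdiam : ∀ C ∈ S, Metric.diam C < 1)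
    (hcomp : ∀ C ∈ S, ∀ C' ∈ S, (C ∩ C').Nonempty → C ⊆ C' ∨ C' ⊆ C)
    (D : X → X → ℝ)
    (hD1 : ∀ x y : X, (∃ C ∈ S, x ∈ C ∧ y ∈ C) →
      D x y = sInf {r : ℝ | ∃ C ∈ S, x ∈ C ∧ y ∈ C ∧ r = Metric.diam C})
    (hD2 : ∀ x y : X, ¬ (∃ C ∈ S, x ∈ C ∧ y ∈ C) → D x y = 1)
    (C₀ : Set X) (hC₀ : C₀ ∈ S) (hC₀pos : 0 < Metric.diam C₀)
    (χ : X → ℝ) (hχ : χ = C₀.indicator fun _ => (1 : ℝ)) :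
    ∀ x y : X, |χ x - χ y| ≤ D x y / Metric.diam C₀ := by
  have hDnonneg : ∀ x y : X, 0 ≤ D x y := by
    intro x y
    by_cases h : ∃ C ∈ S, x ∈ C ∧ y ∈ C
    · rw [hD1 x y h]
      apply Real.sInf_nonneg
      rintro r ⟨C, hC, -, -, rfl⟩
      exact Metric.diam_nonneg
    · rw [hD2 x y h]; norm_num
  -- key: if x ∈ C₀ and y ∉ C₀ then diam C₀ ≤ D x y
  have key : ∀ x y : X, (x ∈ C₀ ∧ y ∉ C₀) ∨ (x ∉ C₀ ∧ y ∈ C₀) →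
      Metric.diam C₀ ≤ D x y := by
    intro x y hxy
    by_cases h : ∃ C ∈ S, x ∈ C ∧ y ∈ C
    · rw [hD1 x y h]
      apply le_csInf
      · obtain ⟨C, hC, hxC, hyC⟩ := h
        exact ⟨Metric.diam C, C, hC, hxC, hyC, rfl⟩
      · rintro r ⟨C, hC, hxC, hyC, rfl⟩
        rcases hxy with ⟨hx, hy⟩ | ⟨hx, hy⟩
        · rcases hcomp C hC C₀ hC₀ ⟨x, hxC, hx⟩ with hsub | hsub
          · exact absurd (hsub hyC) hy
          · exact Metric.diam_mono hsub (hbdd C hC)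
        · rcases hcomp C hC C₀ hC₀ ⟨y, hyC, hy⟩ with hsub | hsub
          · exact absurd (hsub hxC) hx
          · exact Metric.diam_mono hsub (hbdd C hC)
    · rw [hD2 x y h]
      exact (hdiam C₀ hC₀).le
  intro x y
  subst hχ
  by_cases hx : x ∈ C₀ <;> by_cases hy : y ∈ C₀
  · simp [Set.indicator_of_mem hx, Set.indicator_of_mem hy]
    exact div_nonneg (hDnonneg x y) hC₀pos.le
  · rw [Set.indicator_of_mem hx, Set.indicator_of_notMem hy]
    rw [show |(1:ℝ) - 0| = 1 by norm_num, le_div_iff₀ hC₀pos, one_mul]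
    exact key x y (Or.inl ⟨hx, hy⟩)
  · rw [Set.indicator_of_notMem hx, Set.indicator_of_mem hy]
    rw [show |(0:ℝ) - 1| = 1 by norm_num, le_div_iff₀ hC₀pos, one_mul]
    exact key x y (Or.inr ⟨hx, hy⟩)
  · simp [Set.indicator_of_notMem hx, Set.indicator_of_notMem hy]
    exact div_nonneg (hDnonneg x y) hC₀pos.le
end

section
/- Under these hypotheses, ∫_W H² dν ≥ (d/K²) · ∫_X H² dν. -/
open MeasureTheory

/-- Abstract core of Lemma 5.7: the integral of `H²` over `W` is at least the
fraction `d / K²` of the total integral of `H²`. -/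
theorem stmt_2 {X : Type*} [MeasurableSpace X] (ν : Measure X) [IsFiniteMeasure ν]
    (n : ℕ) (hn : 1 ≤ n)
    (B : Fin n → Set X) (hBmeas : ∀ j, MeasurableSet (B j))
    (hcover : ν (Set.univ \ ⋃ j, B j) = 0)
    (H : X → ℝ) (hHmeas : Measurable H) (hHnn : ∀ x, 0 ≤ H x)
    (K d : ℝ) (hK : 1 ≤ K) (hd0 : 0 < d) (hd1 : d ≤ 1)
    (m M : Fin n → ℝ)
    (hm : ∀ j, 0 < m j) (hmM : ∀ j, m j ≤ M j)
    (hbound : ∀ j, ∀ x ∈ B j, m j ≤ H x ∧ H x ≤ M j)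
    (hMK : ∀ j, M j ≤ K * m j)
    (W : Set X) (hW : MeasurableSet W)
    (B' : Fin n → Set X) (hB'meas : ∀ j, MeasurableSet (B' j))
    (hdisj : Pairwise (Function.onFun Disjoint B'))
    (hB'sub : ∀ j, B' j ⊆ W ∩ B j)
    (hB'ν : ∀ j, ENNReal.ofReal d * ν (B j) ≤ ν (B' j)) :
    ENNReal.ofReal (d / K ^ 2) * ∫⁻ x, ENNReal.ofReal (H x ^ 2) ∂ν
      ≤ ∫⁻ x in W, ENNReal.ofReal (H x ^ 2) ∂ν := by
  set f : X → ENNReal := fun x => ENNReal.ofReal (H x ^ 2) with hf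
  have hfmeas : Measurable f := (hHmeas.pow_const 2).ennreal_ofReal
  have hK0 : (0:ℝ) < K := lt_of_lt_of_le one_pos hK
  have hU : MeasurableSet (⋃ j, B j) := MeasurableSet.iUnion hBmeas
  -- the total integral equals the integral over the union
  have h1 : ∫⁻ x, f x ∂ν = ∫⁻ x in ⋃ j, B j, f x ∂ν := by
    rw [← lintegral_add_compl f hU]
    have hz : ν ((⋃ j, B j)ᶜ) = 0 := by
      rwa [Set.compl_eq_univ_diff]
    rw [setLIntegral_measure_zero _ _ hz, add_zero]
  -- pointwise upper bound on each B j
  have h3 : ∀ j, ∫⁻ x in B j, f x ∂ν ≤ ENNReal.ofReal (M j ^ 2) * ν (B j) := by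
    intro j
    calc ∫⁻ x in B j, f x ∂ν
        ≤ ∫⁻ _ in B j, ENNReal.ofReal (M j ^ 2) ∂ν := by
          refine setLIntegral_mono measurable_const fun x hx => ?_
          exact ENNReal.ofReal_le_ofReal
            (pow_le_pow_left₀ (hHnn x) (hbound j x hx).2 2)
      _ = ENNReal.ofReal (M j ^ 2) * ν (B j) := setLIntegral_const _ _
  -- pointwise lower bound on each B' j
  have h4 : ∀ j, ENNReal.ofReal (m j ^ 2) * ν (B' j) ≤ ∫⁻ x in B' j, f x ∂ν := by
    intro j
    calc ENNReal.ofReal (m j ^ 2) * ν (B' j)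
        = ∫⁻ _ in B' j, ENNReal.ofReal (m j ^ 2) ∂ν := (setLIntegral_const _ _).symm
      _ ≤ ∫⁻ x in B' j, f x ∂ν := by
          refine setLIntegral_mono hfmeas fun x hx => ?_
          exact ENNReal.ofReal_le_ofReal
            (pow_le_pow_left₀ (le_of_lt (hm j)) (hbound j x ((hB'sub j) hx).2).1 2)
  -- per-index comparison
  have key : ∀ j, ENNReal.ofReal (d / K ^ 2) * (ENNReal.ofReal (M j ^ 2) * ν (B j))
      ≤ ∫⁻ x in B' j, f x ∂ν := by
    intro j
    have hreal : d / K ^ 2 * M j ^ 2 ≤ m j ^ 2 * d := by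
      rw [div_mul_eq_mul_div, div_le_iff₀ (by positivity)]
      have h1 : M j ^ 2 ≤ (K * m j) ^ 2 :=
        pow_le_pow_left₀ (le_trans (le_of_lt (hm j)) (hmM j)) (hMK j) 2
      nlinarith [hd0.le]
    calc ENNReal.ofReal (d / K ^ 2) * (ENNReal.ofReal (M j ^ 2) * ν (B j))
        = ENNReal.ofReal (d / K ^ 2 * M j ^ 2) * ν (B j) := by
          rw [ENNReal.ofReal_mul (by positivity), mul_assoc]
      _ ≤ ENNReal.ofReal (m j ^ 2 * d) * ν (B j) := by
          exact mul_le_mul_left (ENNReal.ofReal_le_ofReal hreal) _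
      _ = ENNReal.ofReal (m j ^ 2) * (ENNReal.ofReal d * ν (B j)) := by
          rw [ENNReal.ofReal_mul (by positivity), mul_assoc]
      _ ≤ ENNReal.ofReal (m j ^ 2) * ν (B' j) := mul_le_mul_right (hB'ν j) _
      _ ≤ ∫⁻ x in B' j, f x ∂ν := h4 j
  -- assemble
  calc ENNReal.ofReal (d / K ^ 2) * ∫⁻ x, f x ∂ν
      = ENNReal.ofReal (d / K ^ 2) * ∫⁻ x in ⋃ j, B j, f x ∂ν := by rw [h1]
    _ ≤ ENNReal.ofReal (d / K ^ 2) * ∑ j, ∫⁻ x in B j, f x ∂ν := by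
        refine mul_le_mul_right ?_ _
        refine le_trans (lintegral_iUnion_le _ _) ?_
        rw [tsum_fintype]
    _ ≤ ENNReal.ofReal (d / K ^ 2) * ∑ j, ENNReal.ofReal (M j ^ 2) * ν (B j) := by
        exact mul_le_mul_right (Finset.sum_le_sum fun j _ => h3 j) _
    _ = ∑ j, ENNReal.ofReal (d / K ^ 2) * (ENNReal.ofReal (M j ^ 2) * ν (B j)) := by
        rw [Finset.mul_sum]
    _ ≤ ∑ j, ∫⁻ x in B' j, f x ∂ν := Finset.sum_le_sum fun j _ => key j
    _ = ∫⁻ x in ⋃ j, B' j, f x ∂ν := by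
        rw [lintegral_iUnion hB'meas hdisj, tsum_fintype]
    _ ≤ ∫⁻ x in W, f x ∂ν := by
        refine lintegral_mono_set (Set.iUnion_subset fun j => ?_)
        exact fun x hx => ((hB'sub j) hx).1
end

section
/- Under these hypotheses, |Σ_{v ∈ F} e^{φ(v) + i b ψ(v)}·h(v) − Σ_{v ∈ F} e^{φ'(v) + i b ψ'(v)}·h'(v)| ≤ e^{ε}·( β · Σ_{v ∈ F} e^{φ'(v)}·H'(v) + (ε + |b|·c) · Σ_{v ∈ F} e^{φ'(v)}·|h'(v)| ), where i is the imaginary unit. -/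
/-!
Termwise, `e^{φ+ibψ} h - e^{φ'+ibψ'} h' = e^{φ+ibψ} (h - h') + (e^{φ+ibψ} - e^{φ'+ibψ'}) h'`.
The weight difference splits into a modulus part, `|e^φ - e^{φ'}| ≤ e^{φ'} |φ - φ'| e^{|φ - φ'|}`,
and a phase part, bounded by `e^{φ'} |b| |ψ - ψ'|` because `y ↦ e^{iy}` is 1-Lipschitz.
-/

open Complex Finset

lemma Real.abs_exp_sub_one_le_abs_mul_exp (t : ℝ) : |Real.exp t - 1| ≤ |t| * Real.exp |t| := by
  simpa [← ofReal_exp, ← ofReal_one, ← ofReal_sub, norm_real] using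
    norm_exp_sub_sum_le_norm_mul_exp t 1

lemma Real.abs_exp_sub_exp_le (x x' : ℝ) :
    |Real.exp x - Real.exp x'| ≤ Real.exp x' * (|x - x'| * Real.exp |x - x'|) := by
  have hfactor : Real.exp x - Real.exp x' = Real.exp x' * (Real.exp (x - x') - 1) := by
    rw [mul_sub, ← Real.exp_add]; ring_nf
  rw [hfactor, abs_mul, abs_of_pos (Real.exp_pos x')]
  gcongr
  exact Real.abs_exp_sub_one_le_abs_mul_exp _

lemma Complex.norm_exp_mul_I_sub_exp_mul_I_le (y y' : ℝ) :
    ‖cexp (y * I) - cexp (y' * I)‖ ≤ |y - y'| := by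
  have hfactor : cexp (y * I) - cexp (y' * I) = cexp (y' * I) * (cexp (I * ↑(y - y')) - 1) := by
    rw [mul_sub, ← Complex.exp_add]; push_cast; ring_nf
  rw [hfactor, norm_mul, norm_exp_ofReal_mul_I, one_mul]
  exact Real.norm_exp_I_mul_ofReal_sub_one_le

lemma Complex.norm_exp_add_mul_I_sub_exp_add_mul_I_le (x x' y y' : ℝ) :
    ‖cexp (x + y * I) - cexp (x' + y' * I)‖
      ≤ |Real.exp x - Real.exp x'| + Real.exp x' * |y - y'| := by
  have hsplit : cexp (x + y * I) - cexp (x' + y' * I)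
      = (Real.exp x - Real.exp x' : ℝ) * cexp (y * I)
        + Real.exp x' * (cexp (y * I) - cexp (y' * I)) := by
    push_cast; rw [Complex.exp_add, Complex.exp_add]; ring
  rw [hsplit]
  calc _ ≤ ‖((Real.exp x - Real.exp x' : ℝ) : ℂ) * cexp (y * I)‖
        + ‖(Real.exp x' : ℂ) * (cexp (y * I) - cexp (y' * I))‖ := norm_add_le _ _
    _ ≤ _ := by
      rw [norm_mul, norm_mul, norm_exp_ofReal_mul_I, norm_real, norm_real, Real.norm_eq_abs,
        Real.norm_of_nonneg (Real.exp_pos x').le, mul_one]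
      gcongr
      exact norm_exp_mul_I_sub_exp_mul_I_le y y'

lemma Complex.norm_exp_mul_sub_exp_mul_le {x x' y y' ε d : ℝ} (z z' : ℂ)
    (hx : |x - x'| ≤ ε) (hy : |y - y'| ≤ d) :
    ‖cexp (x + y * I) * z - cexp (x' + y' * I) * z'‖
      ≤ Real.exp ε * (Real.exp x' * ‖z - z'‖ + (ε + d) * (Real.exp x' * ‖z'‖)) := by
  have hε : 0 ≤ ε := (abs_nonneg _).trans hx
  have hd : 0 ≤ d := (abs_nonneg _).trans hy
  have hweight : ‖cexp (x + y * I)‖ ≤ Real.exp ε * Real.exp x' := by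
    rw [norm_exp, ← Real.exp_add]
    simp only [add_re, ofReal_re, mul_re, I_re, mul_zero, ofReal_im, I_im, mul_one, sub_self,
      add_zero]
    exact Real.exp_le_exp.2 (by linarith [(abs_le.1 hx).2])
  have hdiff : ‖cexp (x + y * I) - cexp (x' + y' * I)‖ ≤ Real.exp ε * ((ε + d) * Real.exp x') := by
    refine (norm_exp_add_mul_I_sub_exp_add_mul_I_le x x' y y').trans ?_
    calc _ ≤ Real.exp x' * (ε * Real.exp ε) + Real.exp x' * (d * Real.exp ε) := by
          grw [Real.abs_exp_sub_exp_le x x', hx, hy]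
          gcongr
          exact le_mul_of_one_le_right hd (Real.one_le_exp hε)
      _ = _ := by ring
  calc _ = ‖cexp (x + y * I) * (z - z') + (cexp (x + y * I) - cexp (x' + y' * I)) * z'‖ := by
        congr 1; ring
    _ ≤ ‖cexp (x + y * I)‖ * ‖z - z'‖ + ‖cexp (x + y * I) - cexp (x' + y' * I)‖ * ‖z'‖ := by
        grw [norm_add_le, norm_mul, norm_mul]
    _ ≤ Real.exp ε * Real.exp x' * ‖z - z'‖ + Real.exp ε * ((ε + d) * Real.exp x') * ‖z'‖ := by
        gcongr
    _ = _ := by ring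

theorem stmt_11_general {F : Type*} [Fintype F]
    (φ φ' ψ ψ' : F → ℝ) (h h' : F → ℂ) (H' : F → ℝ)
    (b ε c β : ℝ)
    (hφ : ∀ v, |φ v - φ' v| ≤ ε)
    (hψ : ∀ v, |ψ v - ψ' v| ≤ c)
    (hh : ∀ v, ‖h v - h' v‖ ≤ β * H' v) :
    ‖(∑ v, Complex.exp (↑(φ v) + ↑b * ↑(ψ v) * Complex.I) * h v
          - ∑ v, Complex.exp (↑(φ' v) + ↑b * ↑(ψ' v) * Complex.I) * h' v)‖
      ≤ Real.exp ε * (β * ∑ v, Real.exp (φ' v) * H' v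
          + (ε + |b| * c) * ∑ v, Real.exp (φ' v) * ‖h' v‖) := by
  have hterm : ∀ v, ‖cexp (φ v + b * ψ v * I) * h v - cexp (φ' v + b * ψ' v * I) * h' v‖
      ≤ Real.exp ε * (β * (Real.exp (φ' v) * H' v)
        + (ε + |b| * c) * (Real.exp (φ' v) * ‖h' v‖)) := by
    intro v
    have hbψ : |b * ψ v - b * ψ' v| ≤ |b| * c := by
      rw [← mul_sub, abs_mul]; exact mul_le_mul_of_nonneg_left (hψ v) (abs_nonneg b)
    have hbound := norm_exp_mul_sub_exp_mul_le (h v) (h' v) (hφ v) hbψ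
    push_cast at hbound
    grw [hbound, hh v]
    exact (by ring : _ = _).le
  calc _ = ‖∑ v, (cexp (φ v + b * ψ v * I) * h v - cexp (φ' v + b * ψ' v * I) * h' v)‖ := by
        rw [sum_sub_distrib]
    _ ≤ ∑ v, Real.exp ε * (β * (Real.exp (φ' v) * H' v)
        + (ε + |b| * c) * (Real.exp (φ' v) * ‖h' v‖)) :=
      (norm_sum_le _ _).trans (sum_le_sum fun v _ => hterm v)
    _ = _ := by simp only [← mul_sum, sum_add_distrib]

/-- Finite-sum perturbation estimate at the core of the Lasota–Yorke
inequality of Lemma 5.4(b) for the complex transfer operator. -/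
theorem stmt_11 {F : Type*} [Fintype F] [Nonempty F]
    (φ φ' ψ ψ' : F → ℝ) (h h' : F → ℂ) (H' : F → ℝ)
    (hH' : ∀ v, 0 < H' v)
    (b ε c β : ℝ) (hε : 0 ≤ ε) (hc : 0 ≤ c) (hβ : 0 ≤ β)
    (hφ : ∀ v, |φ v - φ' v| ≤ ε)
    (hψ : ∀ v, |ψ v - ψ' v| ≤ c)
    (hh : ∀ v, ‖h v - h' v‖ ≤ β * H' v) :
    ‖(∑ v, Complex.exp (↑(φ v) + ↑b * ↑(ψ v) * Complex.I) * h v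
          - ∑ v, Complex.exp (↑(φ' v) + ↑b * ↑(ψ' v) * Complex.I) * h' v)‖
      ≤ Real.exp ε * (β * ∑ v, Real.exp (φ' v) * H' v
          + (ε + |b| * c) * ∑ v, Real.exp (φ' v) * ‖h' v‖) :=
  stmt_11_general φ φ' ψ ψ' h h' H' b ε c β hφ hψ hh
end
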